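/- arXiv:0904.4325 — 3 statements merged into one kernel-verified Lean document; each statement's English description precedes it below -/
import Mathlib

section
/- Let A ∈ M_{m,n}(ℂ) with m > n and let z = r e^{iθ} with 0 < r ≤ ‖A‖₂. Then there exist unit vectors x̂ ∈ ℂⁿ and ŷ ∈ ℂᵐ such that ŷ* A x̂ = z. In particular the boundary value ‖A‖₂ e^{iθ} is attained. -/
/-!
Take a unit vector `x` at which `‖A x‖ = ‖A‖₂` (compactness of the sphere) and, since `n < m`, a unit
vector `v` orthogonal to the range of `A`. For `|z| ≤ ‖A x‖` a suitable combination
`y = a • A x + b • v` is a unit vector with `⟪y, A x⟫ = z`.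
-/

/-- The spectral norm (largest singular value) of a rectangular complex matrix. -/
noncomputable def specNorm {m n : ℕ} (A : Matrix (Fin m) (Fin n) ℂ) : ℝ :=
  ‖LinearMap.toContinuousLinearMap (Matrix.toEuclideanLin A)‖

/-- The rectangular numerical range `w(A) = {y* A x : ‖x‖₂ = ‖y‖₂ = 1}`. -/
def numRange {m n : ℕ} (A : Matrix (Fin m) (Fin n) ℂ) : Set ℂ :=
  {z | ∃ (x : EuclideanSpace ℂ (Fin n)) (y : EuclideanSpace ℂ (Fin m)),
    ‖x‖ = 1 ∧ ‖y‖ = 1 ∧ dotProduct (star (y : Fin m → ℂ)) (A.mulVec (x : Fin n → ℂ)) = z}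

open scoped InnerProductSpace

section

variable {𝕜 : Type*} [RCLike 𝕜]

theorem ContinuousLinearMap.exists_norm_eq_one_norm_apply_eq_opNorm {E F : Type*}
    [NormedAddCommGroup E] [NormedSpace 𝕜 E] [ProperSpace E] [Nontrivial E]
    [SeminormedAddCommGroup F] [NormedSpace 𝕜 F] (f : E →L[𝕜] F) :
    ∃ x : E, ‖x‖ = 1 ∧ ‖f x‖ = ‖f‖ := by
  have hcompact := (isCompact_sphere (0 : E) 1).image (continuous_norm.comp f.continuous)
  have hne := (Set.nonempty_coe_sort.mp (NormedSpace.sphere_nonempty_rclike 𝕜 zero_le_one)).image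
    fun x : E => ‖f x‖
  obtain ⟨x, hx, hfx⟩ := hcompact.sSup_mem hne
  exact ⟨x, mem_sphere_zero_iff_norm.mp hx, hfx.trans f.sSup_sphere_eq_norm⟩

theorem Submodule.exists_norm_eq_one_mem_orthogonal {F : Type*} [NormedAddCommGroup F]
    [InnerProductSpace 𝕜 F] (K : Submodule 𝕜 F) [K.HasOrthogonalProjection] (hK : K ≠ ⊤) :
    ∃ v ∈ Kᗮ, ‖v‖ = 1 := by
  obtain ⟨v, hv, hv0⟩ := exists_mem_ne_zero_of_ne_bot (mt orthogonal_eq_bot_iff.mp hK)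
  exact ⟨(‖v‖⁻¹ : 𝕜) • v, Kᗮ.smul_mem _ hv, norm_smul_inv_norm hv0⟩

theorem exists_norm_eq_one_inner_eq_of_norm_le {F : Type*} [NormedAddCommGroup F]
    [InnerProductSpace 𝕜 F] {w v : F} (hv : ‖v‖ = 1) (hwv : ⟪w, v⟫_𝕜 = 0) {z : 𝕜}
    (hz : ‖z‖ ≤ ‖w‖) : ∃ y : F, ‖y‖ = 1 ∧ ⟪y, w⟫_𝕜 = z := by
  rcases eq_or_ne w 0 with rfl | hw
  · exact ⟨v, hv, by simpa using (norm_le_zero_iff.mp (by simpa using hz)).symm⟩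
  have hw' : 0 < ‖w‖ := norm_pos_iff.mpr hw
  -- `y = a • w + b • v` with `conj a * ‖w‖² = z` and `b ≥ 0` chosen to make `‖y‖ = 1`
  set a : 𝕜 := star z / (‖w‖ ^ 2 : ℝ)
  set b : ℝ := √(1 - ‖z‖ ^ 2 / ‖w‖ ^ 2)
  have hb : b ^ 2 = 1 - ‖z‖ ^ 2 / ‖w‖ ^ 2 := by
    refine Real.sq_sqrt (sub_nonneg.mpr ((div_le_one (by positivity)).mpr ?_))
    gcongr
  refine ⟨a • w + (b : 𝕜) • v, ?_, ?_⟩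
  · have horth : ⟪a • w, (b : 𝕜) • v⟫_𝕜 = 0 := by simp [inner_smul_left, inner_smul_right, hwv]
    have hsq := norm_add_sq_eq_norm_sq_add_norm_sq_of_inner_eq_zero _ _ horth
    have ha : ‖a • w‖ = ‖z‖ / ‖w‖ := by
      simp only [a, norm_smul, norm_div, norm_star, RCLike.norm_ofReal, abs_pow, abs_norm]
      field_simp
    have hb' : ‖(b : 𝕜) • v‖ = b := by
      rw [norm_smul, hv, mul_one, RCLike.norm_ofReal, abs_of_nonneg (Real.sqrt_nonneg _)]
    rw [ha, hb', ← sq, ← sq, ← sq, hb, div_pow, add_sub_cancel] at hsq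
    exact (pow_eq_one_iff_of_nonneg (norm_nonneg _) two_ne_zero).mp hsq
  · rw [inner_add_left, inner_smul_left, inner_smul_left, inner_eq_zero_symm.mp hwv,
      inner_self_eq_norm_sq_to_K]
    simp only [a, map_div₀, RCLike.star_def, RCLike.conj_conj, RCLike.conj_ofReal, mul_zero,
      add_zero]
    have hw𝕜 : (‖w‖ : 𝕜) ≠ 0 := RCLike.ofReal_ne_zero.mpr hw'.ne'
    push_cast
    field_simp

end

theorem stmt2 {m n : ℕ} (hmn : n < m) (A : Matrix (Fin m) (Fin n) ℂ)
    (r θ : ℝ) (hr : 0 < r) (hrA : r ≤ specNorm A) :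
    ∃ (x : EuclideanSpace ℂ (Fin n)) (y : EuclideanSpace ℂ (Fin m)),
      ‖x‖ = 1 ∧ ‖y‖ = 1 ∧
      dotProduct (star (y : Fin m → ℂ)) (A.mulVec (x : Fin n → ℂ))
        = r * Complex.exp (θ * Complex.I) := by
  set L := Matrix.toEuclideanLin A
  set T := LinearMap.toContinuousLinearMap L
  have : Nontrivial (EuclideanSpace ℂ (Fin n)) := by
    by_contra h
    have := not_nontrivial_iff_subsingleton.mp h
    exact hr.not_ge (hrA.trans_eq T.opNorm_subsingleton)
  obtain ⟨x, hx, hTx⟩ := T.exists_norm_eq_one_norm_apply_eq_opNorm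
  have hrange : LinearMap.range L ≠ ⊤ := fun h =>
    (L.finrank_le_finrank_of_surjective (LinearMap.range_eq_top.mp h)).not_gt (by simpa using hmn)
  obtain ⟨v, hv, hv1⟩ := (LinearMap.range L).exists_norm_eq_one_mem_orthogonal hrange
  obtain ⟨y, hy, hyTx⟩ := exists_norm_eq_one_inner_eq_of_norm_le hv1
    ((LinearMap.range L).inner_right_of_mem_orthogonal ⟨x, rfl⟩ hv)
    (z := r * Complex.exp (θ * Complex.I)) (by
      rw [norm_mul, Complex.norm_exp_ofReal_mul_I, mul_one, Complex.norm_real,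
        Real.norm_of_nonneg hr.le]
      exact hrA.trans_eq hTx.symm)
  refine ⟨x, y, hx, hy, ?_⟩
  rw [← hyTx, EuclideanSpace.inner_eq_star_dotProduct, dotProduct_comm]
  rfl
end

section
/- Let A, B₀ ∈ M_{m,n}(ℂ) with ‖B₀‖_F ≥ 1, and write c = ⟨A, B₀⟩/‖B₀‖_F². Then |c| + ‖A − c B₀‖_F · √(1 − ‖B₀‖_F^{-2}) ≤ ‖A‖_F. Consequently every disc w_{‖·‖_F}(A, B₀) = {z : |z − c| ≤ ‖A − c B₀‖_F √(1 − ‖B₀‖_F^{-2})} is contained in the disc D(0, ‖A‖_F). -/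
open scoped Matrix

/-- The Frobenius norm of a rectangular complex matrix. -/
noncomputable def frobNorm {m n : ℕ} (A : Matrix (Fin m) (Fin n) ℂ) : ℝ :=
  Real.sqrt (∑ i, ∑ j, ‖A i j‖ ^ 2)

/-- The Frobenius inner product `⟨A, B⟩ = tr(B* A)`. -/
noncomputable def frobInner {m n : ℕ} (A B : Matrix (Fin m) (Fin n) ℂ) : ℂ :=
  (Bᴴ * A).trace

/-!
By Pythagoras, `‖A‖² = ‖A - c B₀‖² + |c|² ‖B₀‖²`. Writing `N = ‖B₀‖` and `s = √(1 - N⁻²)`, so that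
`s² N² = N² - 1`, one checks `N² (‖A‖² - (|c| + ‖A - c B₀‖ s)²) = (‖A - c B₀‖ - |c| s N²)² ≥ 0`.
The inclusion of discs then follows from the triangle inequality `|z| ≤ |z - c| + |c|`.
-/

lemma add_mul_sqrt_one_sub_inv_sq_le {x r N : ℝ} (hN : 1 ≤ N) :
    x + r * √(1 - (N ^ 2)⁻¹) ≤ √(r ^ 2 + x ^ 2 * N ^ 2) := by
  set s := √(1 - (N ^ 2)⁻¹)
  have hs : s ^ 2 * N ^ 2 = N ^ 2 - 1 := by
    rw [Real.sq_sqrt (sub_nonneg.2 (inv_le_one_of_one_le₀ (one_le_pow₀ hN)))]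
    field_simp
  have hsq : N ^ 2 * (r ^ 2 + x ^ 2 * N ^ 2 - (x + r * s) ^ 2) = (r - x * s * N ^ 2) ^ 2 := by
    linear_combination (-(r ^ 2 + x ^ 2 * N ^ 2)) * hs
  have hnonneg : 0 ≤ N ^ 2 * (r ^ 2 + x ^ 2 * N ^ 2 - (x + r * s) ^ 2) := hsq ▸ sq_nonneg _
  exact Real.le_sqrt_of_sq_le (sub_nonneg.1 (nonneg_of_mul_nonneg_right hnonneg (by positivity)))

section InnerProductSpace

variable {𝕜 E : Type*} [RCLike 𝕜] [NormedAddCommGroup E] [InnerProductSpace 𝕜 E]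

open scoped InnerProductSpace

theorem norm_sq_eq_norm_sub_smul_sq_add {a b : E} {c : 𝕜}
    (hc : c = ⟪b, a⟫_𝕜 / (‖b‖ : 𝕜) ^ 2) :
    ‖a‖ ^ 2 = ‖a - c • b‖ ^ 2 + ‖c‖ ^ 2 * ‖b‖ ^ 2 := by
  rcases eq_or_ne b 0 with rfl | hb
  · simp
  have hcb : c * (‖b‖ : 𝕜) ^ 2 = ⟪b, a⟫_𝕜 := by
    rw [hc, div_mul_cancel₀]
    exact pow_ne_zero _ (RCLike.ofReal_ne_zero.2 (norm_ne_zero_iff.2 hb))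
  have horth : ⟪c • b, a - c • b⟫_𝕜 = 0 := by
    rw [inner_sub_right, inner_smul_left, inner_smul_right, inner_smul_left,
      inner_self_eq_norm_sq_to_K, ← hcb]
    ring
  have := norm_add_sq_eq_norm_sq_add_norm_sq_of_inner_eq_zero _ _ horth
  rw [add_sub_cancel, norm_smul] at this
  linear_combination this

theorem norm_add_norm_sub_smul_mul_sqrt_le {a b : E} (hb : 1 ≤ ‖b‖) {c : 𝕜}
    (hc : c = ⟪b, a⟫_𝕜 / (‖b‖ : 𝕜) ^ 2) :
    ‖c‖ + ‖a - c • b‖ * √(1 - (‖b‖ ^ 2)⁻¹) ≤ ‖a‖ :=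
  calc ‖c‖ + ‖a - c • b‖ * √(1 - (‖b‖ ^ 2)⁻¹)
      ≤ √(‖a - c • b‖ ^ 2 + ‖c‖ ^ 2 * ‖b‖ ^ 2) :=
        add_mul_sqrt_one_sub_inv_sq_le hb
    _ = ‖a‖ := by rw [← norm_sq_eq_norm_sub_smul_sq_add hc, Real.sqrt_sq (norm_nonneg _)]

end InnerProductSpace

namespace Matrix

variable {m n : ℕ}

def toEuclidean : Matrix (Fin m) (Fin n) ℂ →ₗ[ℂ] EuclideanSpace ℂ (Fin m × Fin n) where
  toFun A := WithLp.toLp 2 fun p => A p.1 p.2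
  map_add' _ _ := rfl
  map_smul' _ _ := rfl

theorem frobNorm_eq_norm_toEuclidean (A : Matrix (Fin m) (Fin n) ℂ) :
    frobNorm A = ‖toEuclidean A‖ := by
  rw [frobNorm, EuclideanSpace.norm_eq, Fintype.sum_prod_type]
  rfl

theorem frobInner_eq_inner_toEuclidean (A B : Matrix (Fin m) (Fin n) ℂ) :
    frobInner A B = inner ℂ (toEuclidean B) (toEuclidean A) := by
  rw [frobInner, PiLp.inner_apply, trace, Fintype.sum_prod_type, Finset.sum_comm]
  simp only [diag_apply, mul_apply, conjTranspose_apply, RCLike.inner_apply, mul_comm]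
  rfl

end Matrix

theorem stmt8 {m n : ℕ} (A B₀ : Matrix (Fin m) (Fin n) ℂ) (hB : 1 ≤ frobNorm B₀)
    (c : ℂ) (hc : c = frobInner A B₀ / ((frobNorm B₀ : ℂ) ^ 2)) :
    ‖c‖ + frobNorm (A - c • B₀) * Real.sqrt (1 - ((frobNorm B₀) ^ 2)⁻¹)
      ≤ frobNorm A ∧
    {z : ℂ | ‖z - c‖ ≤ frobNorm (A - c • B₀) * Real.sqrt (1 - ((frobNorm B₀) ^ 2)⁻¹)}
      ⊆ Metric.closedBall (0 : ℂ) (frobNorm A) := by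
  simp only [Matrix.frobNorm_eq_norm_toEuclidean, map_sub, map_smul] at hB hc ⊢
  rw [Matrix.frobInner_eq_inner_toEuclidean] at hc
  have hineq := norm_add_norm_sub_smul_mul_sqrt_le hB hc
  refine ⟨hineq, fun z (hz : ‖z - c‖ ≤ _) => mem_closedBall_zero_iff.2 ?_⟩
  linarith [norm_le_norm_sub_add z c]
end

section
/- Let m > n, A ∈ M_{m,n}(ℂ), and H ∈ M_{m,n}(ℂ) with H*H = I_n. Then F(H*A) ⊆ F(A H*), i.e., the lower numerical range w_l(A) is contained in the higher numerical range w_h(A). -/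
open scoped Matrix InnerProductSpace

/-!
`Hᴴ A = Hᴴ (A Hᴴ) H` is a compression of `A Hᴴ`, and the isometry `H` maps unit vectors to unit
vectors with `x* Hᴴ (A Hᴴ) H x = (H x)* (A Hᴴ) (H x)`; this is the principal-submatrix argument
with `U = [H R]` without needing to complete `H` to a unitary.
-/

/-- The classical numerical range `F(M) = {x* M x : ‖x‖₂ = 1}` of a square matrix. -/
def numRangeSq {ι : Type*} [Fintype ι] (M : Matrix ι ι ℂ) : Set ℂ :=
  {z | ∃ x : EuclideanSpace ℂ ι, ‖x‖ = 1 ∧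
    dotProduct (star (x : ι → ℂ)) (M.mulVec (x : ι → ℂ)) = z}

namespace Matrix

variable {ι κ : Type*} [Fintype ι] [Fintype κ]

theorem star_mulVec_dotProduct {R : Type*} [CommSemiring R] [StarRing R]
    (H : Matrix κ ι R) (x : ι → R) (v : κ → R) :
    star (H *ᵥ x) ⬝ᵥ v = star x ⬝ᵥ Hᴴ *ᵥ v := by
  rw [star_mulVec, dotProduct_mulVec]

theorem norm_toLp_mulVec_of_conjTranspose_mul_self_eq_one {𝕜 : Type*} [RCLike 𝕜]
    [DecidableEq ι] {H : Matrix κ ι 𝕜} (hH : Hᴴ * H = 1) (x : EuclideanSpace 𝕜 ι) :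
    ‖WithLp.toLp 2 (H *ᵥ x)‖ = ‖x‖ := by
  have hinner : ⟪WithLp.toLp 2 (H *ᵥ x), WithLp.toLp 2 (H *ᵥ x)⟫_𝕜 = ⟪x, x⟫_𝕜 := by
    rw [EuclideanSpace.inner_eq_star_dotProduct, EuclideanSpace.inner_eq_star_dotProduct,
      dotProduct_comm, dotProduct_comm x.ofLp, WithLp.ofLp_toLp, star_mulVec_dotProduct,
      mulVec_mulVec, hH, one_mulVec]
  rw [inner_self_eq_norm_sq_to_K, inner_self_eq_norm_sq_to_K] at hinner
  exact (pow_left_inj₀ (norm_nonneg _) (norm_nonneg _) two_ne_zero).mp (mod_cast hinner)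

theorem numRangeSq_conjTranspose_mul_mul_subset [DecidableEq ι] {H : Matrix κ ι ℂ}
    (hH : Hᴴ * H = 1) (M : Matrix κ κ ℂ) : numRangeSq (Hᴴ * M * H) ⊆ numRangeSq M := by
  rintro z ⟨x, hx, rfl⟩
  refine ⟨WithLp.toLp 2 (H *ᵥ x), ?_, ?_⟩
  · rw [norm_toLp_mulVec_of_conjTranspose_mul_self_eq_one hH, hx]
  · rw [WithLp.ofLp_toLp, star_mulVec_dotProduct, mulVec_mulVec, mulVec_mulVec,
      Matrix.mul_assoc]

end Matrix

theorem stmt12_general {m n : ℕ} (A : Matrix (Fin m) (Fin n) ℂ)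
    (H : Matrix (Fin m) (Fin n) ℂ) (hH : Hᴴ * H = 1) :
    numRangeSq (Hᴴ * A) ⊆ numRangeSq (A * Hᴴ) := by
  have hcompress : Hᴴ * (A * Hᴴ) * H = Hᴴ * A := by
    rw [Matrix.mul_assoc, Matrix.mul_assoc, hH, Matrix.mul_one]
  simpa only [hcompress] using Matrix.numRangeSq_conjTranspose_mul_mul_subset hH (A * Hᴴ)

theorem stmt12 {m n : ℕ} (hmn : n < m) (A : Matrix (Fin m) (Fin n) ℂ)
    (H : Matrix (Fin m) (Fin n) ℂ) (hH : Hᴴ * H = 1) :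
    numRangeSq (Hᴴ * A) ⊆ numRangeSq (A * Hᴴ) :=
  stmt12_general A H hH
end
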